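/- Let V be a finite vertex set, A, B ⊆ V with A ∪ B = V and A ∩ B = {a}. Let D₁ and D₂ be loopless digraphs on V all of whose arcs join vertices of A, respectively vertices of B, and let h₁, h₂ : V → ℕ. Suppose the Latvian game on the restriction of D₁ to A with hatness h₁ is winnable, and the Latvian game on the restriction of D₂ to B with hatness h₂ is winnable. Then the Latvian game on the digraph whose arc set is the union of the arcs of D₁ and of D₂, with hatness h given by h v = h₁ v for v ∈ A \ {a}, h v = h₂ v for v ∈ B \ {a}, and h a = h₁ a · h₂ a, is winnable. -/

import Mathlib

/-!
A Latvian strategy is the same as a single guess per sage. Give the glued vertex `a` the pair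
of its colors in the two games and let every sage guess, coordinatewise, what she guesses in the
games she belongs to. For a coloring, the first game has a correct sage; if it is not `a`, she
is correct in the glued game. Otherwise the second game has a correct sage, who is either not `a`
or again `a`, and in the latter case `a` is right in both coordinates.
-/

/-- A Czech hat game on the digraph with adjacency `D` (sage `v` sees sage `u`
iff `D v u`), guessness `g`, and hatness `h`, is winnable: there is a strategy
assigning to each sage `v` a set of `g v` guesses, depending only on the hats
she sees, such that for every coloring some sage guesses her own hat color. -/
def HatGame.Winnable {V : Type*} (D : V → V → Prop) (g h : V → ℕ) : Prop :=
  ∃ F : ∀ v : V, (∀ u : V, Fin (h u)) → Finset (Fin (h v)),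
    (∀ (v : V) (c c' : ∀ u : V, Fin (h u)),
        (∀ u : V, D v u → c u = c' u) → F v c = F v c') ∧
    (∀ (v : V) (c : ∀ u : V, Fin (h u)), (F v c).card = g v) ∧
    (∀ c : ∀ u : V, Fin (h u), ∃ v : V, c v ∈ F v c)

theorem Nat.card_prop_fun (p : Prop) [Decidable p] (α : Type*) :
    Nat.card (p → α) = if p then Nat.card α else 1 := by
  split_ifs with hp
  · have := uniqueProp hp
    exact Nat.card_congr (Equiv.funUnique p α)
  · have : IsEmpty p := ⟨hp⟩
    simp

theorem Fin.nonempty_equiv_prop_fun_prod {p q : Prop} [Decidable p] [Decidable q] {m n k : ℕ}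
    (hk : k = (if p then m else 1) * (if q then n else 1)) :
    Nonempty (Fin k ≃ (p → Fin m) × (q → Fin n)) := by
  rw [← Finite.card_eq, Nat.card_prod, Nat.card_prop_fun, Nat.card_prop_fun]
  simpa using hk

namespace HatGame

variable {V : Type*}

structure IsWinningGuess {C : V → Type*} (D : V → V → Prop) (G : ∀ v, (∀ u, C u) → C v) :
    Prop where
  congr : ∀ v c c', (∀ u, D v u → c u = c' u) → G v c = G v c'
  wins : ∀ c, ∃ v, c v = G v c

theorem winnable_one_iff {D : V → V → Prop} {h : V → ℕ} :
    Winnable D (fun _ => 1) h ↔ ∃ G : ∀ v, (∀ u, Fin (h u)) → Fin (h v), IsWinningGuess D G := by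
  constructor
  · rintro ⟨F, hF, hcard, hwin⟩
    choose G hG using fun v c => Finset.card_eq_one.mp (hcard v c)
    refine ⟨G, ⟨fun v c c' hcc' => ?_, fun c => ?_⟩⟩
    · simpa [hG] using hF v c c' hcc'
    · obtain ⟨v, hv⟩ := hwin c
      exact ⟨v, by simpa [hG] using hv⟩
  · rintro ⟨G, hG⟩
    exact ⟨fun v c => {G v c}, fun v c c' hcc' => congrArg _ (hG.congr v c c' hcc'),
      fun _ _ => Finset.card_singleton _,
      fun c => (hG.wins c).imp fun _ hv => Finset.mem_singleton.mpr hv⟩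

section Glue

variable {A B : Set V} {C : V → Type*} {C₁ : A → Type*} {C₂ : B → Type*}
  (e : ∀ v, C v ≃ (∀ hA : v ∈ A, C₁ ⟨v, hA⟩) × (∀ hB : v ∈ B, C₂ ⟨v, hB⟩))
  {G₁ : ∀ u : A, (∀ w : A, C₁ w) → C₁ u} {G₂ : ∀ u : B, (∀ w : B, C₂ w) → C₂ u}

def restrictLeft (c : ∀ v, C v) (u : A) : C₁ u := (e u (c u)).1 u.2

def restrictRight (c : ∀ v, C v) (u : B) : C₂ u := (e u (c u)).2 u.2

variable (G₁ G₂) in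
def glueGuess (v : V) (c : ∀ v, C v) : C v :=
  (e v).symm (fun hA => G₁ ⟨v, hA⟩ (restrictLeft e c), fun hB => G₂ ⟨v, hB⟩ (restrictRight e c))

theorem eq_glueGuess {c : ∀ v, C v} {v : V}
    (h₁ : ∀ hA : v ∈ A, restrictLeft e c ⟨v, hA⟩ = G₁ ⟨v, hA⟩ (restrictLeft e c))
    (h₂ : ∀ hB : v ∈ B, restrictRight e c ⟨v, hB⟩ = G₂ ⟨v, hB⟩ (restrictRight e c)) :
    c v = glueGuess e G₁ G₂ v c :=
  (e v).eq_symm_apply.mpr (Prod.ext (funext h₁) (funext h₂))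

theorem IsWinningGuess.glue {D₁ D₂ : V → V → Prop} (hAB : (A ∩ B).Subsingleton)
    (hG₁ : IsWinningGuess (fun x y : A => D₁ x y) G₁)
    (hG₂ : IsWinningGuess (fun x y : B => D₂ x y) G₂) :
    IsWinningGuess (fun u v => D₁ u v ∨ D₂ u v) (glueGuess e G₁ G₂) where
  congr v c c' hcc' := by
    have h₁ : ∀ hA : v ∈ A,
        G₁ ⟨v, hA⟩ (restrictLeft e c) = G₁ ⟨v, hA⟩ (restrictLeft e c') := fun _ =>
      hG₁.congr _ _ _ fun u hu => by simp only [restrictLeft, hcc' u (Or.inl hu)]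
    have h₂ : ∀ hB : v ∈ B,
        G₂ ⟨v, hB⟩ (restrictRight e c) = G₂ ⟨v, hB⟩ (restrictRight e c') := fun _ =>
      hG₂.congr _ _ _ fun u hu => by simp only [restrictRight, hcc' u (Or.inr hu)]
    simp only [glueGuess, h₁, h₂]
  wins c := by
    obtain ⟨⟨v, hvA⟩, hv⟩ := hG₁.wins (restrictLeft e c)
    by_cases hvB : v ∈ B
    · obtain ⟨⟨w, hwB⟩, hw⟩ := hG₂.wins (restrictRight e c)
      by_cases hwA : w ∈ A
      · obtain rfl : v = w := hAB ⟨hvA, hvB⟩ ⟨hwA, hwB⟩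
        exact ⟨v, eq_glueGuess e (fun _ => hv) (fun _ => hw)⟩
      · exact ⟨w, eq_glueGuess e (fun hA => absurd hA hwA) (fun _ => hw)⟩
    · exact ⟨v, eq_glueGuess e (fun _ => hv) (fun hB => absurd hB hvB)⟩

end Glue

end HatGame

theorem latvian_single_point_product {V : Type*}
    (A B : Set V) (a : V) (hAB : A ∪ B = Set.univ) (hab : A ∩ B = {a})
    (D₁ D₂ : V → V → Prop)
    (h₁ h₂ h : V → ℕ)
    (hw₁ : HatGame.Winnable (fun x y : A => D₁ x y) (fun _ => 1) (fun x => h₁ x))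
    (hw₂ : HatGame.Winnable (fun x y : B => D₂ x y) (fun _ => 1) (fun x => h₂ x))
    (hhA : ∀ v ∈ A, v ≠ a → h v = h₁ v)
    (hhB : ∀ v ∈ B, v ≠ a → h v = h₂ v)
    (hha : h a = h₁ a * h₂ a) :
    HatGame.Winnable (fun u v : V => D₁ u v ∨ D₂ u v) (fun _ => 1) h := by
  classical
  have ha : a ∈ A ∩ B := hab ▸ rfl
  have hcard : ∀ v, h v = (if v ∈ A then h₁ v else 1) * (if v ∈ B then h₂ v else 1) := by
    intro v
    by_cases hA : v ∈ A <;> by_cases hB : v ∈ B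
    · obtain rfl : v = a := hab.subset ⟨hA, hB⟩
      simp [hA, hB, hha]
    · simp [hA, hB, hhA v hA (ne_of_mem_of_not_mem ha.2 hB).symm]
    · simp [hA, hB, hhB v hB (ne_of_mem_of_not_mem ha.1 hA).symm]
    · exact ((hAB ▸ Set.mem_univ v : v ∈ A ∪ B).elim hA hB).elim
  have e := fun v => (Fin.nonempty_equiv_prop_fun_prod (hcard v)).some
  obtain ⟨G₁, hG₁⟩ := HatGame.winnable_one_iff.mp hw₁
  obtain ⟨G₂, hG₂⟩ := HatGame.winnable_one_iff.mp hw₂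
  exact HatGame.winnable_one_iff.mpr ⟨_, hG₁.glue e (hab ▸ Set.subsingleton_singleton) hG₂⟩
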